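/- Let B ⊂ ℝⁿ be a measurable set with |B| < ∞, let f ∈ L^β(B) and g ≥ 0 measurable on B, with α < 1, β > 0, C₀ > 0, and suppose that ∫_{B ∩ {|f| ≤ k}} |f|^{−α} g dx ≤ C₀ k^{1−α} for all k > 0. Then for every λ > 0, λ^{β/(1−α+β)} |{x ∈ B : |f(x)|^{−α} g(x) > λ}| ≤ 2 C₀^{β/(1−α+β)} ‖f‖_{L^β(B)}^{β(1−α)/(1−α+β)}; consequently, for every 0 < γ < β/(1−α+β), ∫_B |f|^{−αγ} g^γ dx ≤ C |B|^{1 − γ(1−α+β)/β} C₀^γ ‖f‖_{L^β(B)}^{γ(1−α)}, with C depending only on α, β, γ. -/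

import Mathlib

open MeasureTheory Metric Set Filter
open scoped ENNReal NNReal Topology InnerProductSpace

noncomputable section

abbrev Euc (n : ℕ) := EuclideanSpace ℝ (Fin n)

namespace NQH

variable {n : ℕ}

/-- The coordinate-wise gradient vector of a scalar function on `ℝⁿ`. -/
def grad (φ : Euc n → ℝ) (x : Euc n) : Euc n :=
  (WithLp.equiv 2 (Fin n → ℝ)).symm fun i => fderiv ℝ φ x (EuclideanSpace.single i 1)

/-- The structural (growth, smoothness and ellipticity) assumptions on the
Carathéodory nonlinearity `A : ℝⁿ × ℝⁿ → ℝⁿ`. -/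
structure IsEllipticA (p Λ : ℝ) (A : Euc n → Euc n → Euc n) : Prop where
  pos : 0 < Λ
  measx : ∀ ξ : Euc n, Measurable fun x => A x ξ
  contx : ∀ᵐ x : Euc n ∂volume, Continuous fun ξ => A x ξ
  growth : ∀ᵐ x : Euc n ∂volume, ∀ ξ : Euc n, ‖A x ξ‖ ≤ Λ * ‖ξ‖ ^ (p - 1)
  dgrowth : ∀ᵐ x : Euc n ∂volume, ∀ ξ : Euc n, ξ ≠ 0 →
    ‖fderiv ℝ (A x) ξ‖ ≤ Λ * ‖ξ‖ ^ (p - 2)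
  ellip : ∀ᵐ x : Euc n ∂volume, ∀ ξ : Euc n, ξ ≠ 0 → ∀ η : Euc n,
    Λ⁻¹ * ‖η‖ ^ 2 * ‖ξ‖ ^ (p - 2) ≤ ⟪(fderiv ℝ (A x) ξ) η, η⟫_ℝ

/-- Smooth test functions compactly supported in `Ω`. -/
def IsTestFn (Ω : Set (Euc n)) (φ : Euc n → ℝ) : Prop :=
  ContDiff ℝ (⊤ : ℕ∞) φ ∧ HasCompactSupport φ ∧ tsupport φ ⊆ Ω

/-- `Du` is the distributional gradient of `u` on all of `ℝⁿ`. -/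
def HasWeakGrad (u : Euc n → ℝ) (Du : Euc n → Euc n) : Prop :=
  ∀ φ : Euc n → ℝ, ContDiff ℝ (⊤ : ℕ∞) φ → HasCompactSupport φ → ∀ i : Fin n,
    (∫ x, u x * fderiv ℝ φ x (EuclideanSpace.single i 1)) = - ∫ x, Du x i * φ x

/-- `Du` is the distributional gradient of `u` on the open set `Ω`. -/
def HasWeakGradOn (u : Euc n → ℝ) (Du : Euc n → Euc n) (Ω : Set (Euc n)) : Prop :=
  ∀ φ : Euc n → ℝ, IsTestFn Ω φ → ∀ i : Fin n,
    (∫ x in Ω, u x * fderiv ℝ φ x (EuclideanSpace.single i 1)) = - ∫ x in Ω, Du x i * φ x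

/-- Membership in the zero-boundary-value Sobolev space `W_0^{1,p}(Ω)`,
modeled through the zero extension: `u` and its gradient vanish outside `Ω`, the zero
extension has a global distributional gradient, and both belong to `L^p`. -/
def MemW10 (Ω : Set (Euc n)) (p : ℝ) (u : Euc n → ℝ) (Du : Euc n → Euc n) : Prop :=
  MemLp u (ENNReal.ofReal p) volume ∧ MemLp Du (ENNReal.ofReal p) volume ∧
    (∀ x, x ∉ Ω → u x = 0 ∧ Du x = 0) ∧ HasWeakGrad u Du

/-- Membership in the local Sobolev space `W^{1,p}_loc(Ω)`. -/
def MemW1ploc (Ω : Set (Euc n)) (p : ℝ) (u : Euc n → ℝ) (Du : Euc n → Euc n) : Prop :=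
  (∀ K : Set (Euc n), IsCompact K → K ⊆ Ω →
    (∫⁻ x in K, (‖u x‖₊ : ℝ≥0∞) ^ p + (‖Du x‖₊ : ℝ≥0∞) ^ p) < ∞) ∧
    HasWeakGradOn u Du Ω

/-- The `(1,p)`-capacity of a set `K` relative to `Ω`. -/
def cap1p (Ω : Set (Euc n)) (p : ℝ) (K : Set (Euc n)) : ℝ :=
  sInf {c : ℝ | ∃ φ : Euc n → ℝ, IsTestFn Ω φ ∧ (∀ x ∈ K, 1 ≤ φ x) ∧
    c = ∫ x, ‖fderiv ℝ φ x‖ ^ p}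

/-- A measure vanishing on compact sets of zero `(1,p)`-capacity
(absolute continuity with respect to the capacity). -/
def CapAC (Ω : Set (Euc n)) (p : ℝ) (m : Measure (Euc n)) : Prop :=
  ∀ K : Set (Euc n), IsCompact K → K ⊆ Ω → cap1p Ω p K = 0 → m K = 0

/-- A measure concentrated on a set of zero `(1,p)`-capacity. -/
def CapSingular (Ω : Set (Euc n)) (p : ℝ) (m : Measure (Euc n)) : Prop :=
  ∃ S : Set (Euc n), S ⊆ Ω ∧ (∀ K : Set (Euc n), IsCompact K → K ⊆ S → cap1p Ω p K = 0) ∧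
    m Sᶜ = 0

/-- The truncation `T_k(s) = max (min s k) (-k)`. -/
def Tk (k s : ℝ) : ℝ := max (min s k) (-k)

/-- Integral of `φ` against a signed measure (via the Jordan decomposition). -/
def sInt (μ : SignedMeasure (Euc n)) (φ : Euc n → ℝ) : ℝ :=
  ∫ x, φ x ∂μ.toJordanDecomposition.posPart - ∫ x, φ x ∂μ.toJordanDecomposition.negPart

/-- Integral of `φ` against a signed measure over a set `s`. -/
def sIntOn (μ : SignedMeasure (Euc n)) (s : Set (Euc n)) (φ : Euc n → ℝ) : ℝ :=
  ∫ x in s, φ x ∂μ.toJordanDecomposition.posPart -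
    ∫ x in s, φ x ∂μ.toJordanDecomposition.negPart

/-- The signed measure `μ` has density `f` with respect to Lebesgue measure. -/
def SMHasDensity (μ : SignedMeasure (Euc n)) (f : Euc n → ℝ) : Prop :=
  ∀ s : Set (Euc n), MeasurableSet s → μ s = ∫ x in s, f x

/-- Renormalized solution of `-div A(x,∇u) = μ` in `Ω`, `u = 0` on `∂Ω`
(Definition 1.4 of the paper).  The function `Du` plays the role of the
generalized gradient `∇u`. -/
structure IsRenormSol (Ω : Set (Euc n)) (p : ℝ) (A : Euc n → Euc n → Euc n)
    (μ : SignedMeasure (Euc n)) (u : Euc n → ℝ) (Du : Euc n → Euc n) : Prop where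
  aemeas : AEMeasurable u volume
  trunc : ∀ k : ℝ, 0 < k →
    MemW10 Ω p (fun x => Tk k (u x)) (fun x => if |u x| ≤ k then Du x else 0)
  gradLr : ∀ r : ℝ, 0 < r → r < (n : ℝ) / ((n : ℝ) - 1) →
    (∫⁻ x in Ω, ((‖Du x‖₊ : ℝ≥0∞) ^ (p - 1)) ^ r) < ∞
  renorm : ∃ μ0 μs : SignedMeasure (Euc n), μ = μ0 + μs ∧
    CapAC Ω p μ0.totalVariation ∧ CapSingular Ω p μs.totalVariation ∧
    ∃ lam lam' : ℝ → Measure (Euc n),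
      (∀ k : ℝ, 0 < k → IsFiniteMeasure (lam k) ∧ IsFiniteMeasure (lam' k) ∧
        CapAC Ω p (lam k) ∧ CapAC Ω p (lam' k) ∧
        lam k {x | u x ≠ k} = 0 ∧ lam' k {x | u x ≠ -k} = 0) ∧
      (∀ φ : BoundedContinuousFunction (Euc n) ℝ,
        Tendsto (fun k : ℝ => ∫ x, φ x ∂(lam k)) atTop
          (𝓝 (∫ x, φ x ∂μs.toJordanDecomposition.posPart)) ∧
        Tendsto (fun k : ℝ => ∫ x, φ x ∂(lam' k)) atTop
          (𝓝 (∫ x, φ x ∂μs.toJordanDecomposition.negPart))) ∧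
      (∀ k : ℝ, 0 < k → ∀ (φ : Euc n → ℝ) (Dφ : Euc n → Euc n),
        MemW10 Ω p φ Dφ → (∃ Cb : ℝ, ∀ x, |φ x| ≤ Cb) →
        (∫ x in {x | |u x| < k}, ⟪A x (Du x), Dφ x⟫_ℝ) =
          sIntOn μ0 {x | |u x| < k} φ + ∫ x, φ x ∂(lam k) - ∫ x, φ x ∂(lam' k))

/-- `Ω` is a `(δ, R₀)`-Reifenberg flat domain. -/
def ReifenbergFlat (Ω : Set (Euc n)) (δ R₀ : ℝ) : Prop :=
  ∀ x ∈ frontier Ω, ∀ r : ℝ, 0 < r → r ≤ R₀ → ∃ ν : Euc n, ‖ν‖ = 1 ∧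
    ball x r ∩ {y | δ * r < ⟪y - x, ν⟫_ℝ} ⊆ Ω ∧
    ball x r ∩ Ω ⊆ {y | -(δ * r) < ⟪y - x, ν⟫_ℝ}

/-- The BMO-type seminorm `[A]_{R₀}` of the nonlinearity. -/
def bmoSemi (A : Euc n → Euc n → Euc n) (p R₀ : ℝ) : ℝ :=
  ⨆ y : Euc n, ⨆ r : Ioc (0 : ℝ) R₀,
    ⨍ x in ball y (r : ℝ), ⨆ ζ : {ζ : Euc n // ζ ≠ 0},
      ‖A x ζ - ⨍ x' in ball y (r : ℝ), A x' ζ‖ / ‖(ζ : Euc n)‖ ^ (p - 1)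

/-- The fractional maximal function `M_α` of a measure. -/
def fracMaximal (α : ℝ) (ω : Measure (Euc n)) (x : Euc n) : ℝ≥0∞ :=
  ⨆ (ρ : ℝ) (_ : 0 < ρ), ω (ball x ρ) / ENNReal.ofReal (ρ ^ ((n : ℝ) - α))

/-- The quantity `K₁(μ)`: `M₁[|μ|]` in the regular range and
`(M_σ[|μ|^σ])^{1/σ}` in the singular range; `f` is the density of `μ`
used in the latter case. -/
def K1 (p σ : ℝ) (μ : SignedMeasure (Euc n)) (f : Euc n → ℝ) (x : Euc n) : ℝ≥0∞ :=
  if (3 * (n : ℝ) - 2) / (2 * (n : ℝ) - 1) < p then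
    fracMaximal 1 μ.totalVariation x
  else
    (fracMaximal σ (volume.withDensity fun y => (‖f y‖₊ : ℝ≥0∞) ^ σ) x) ^ (1 / σ)

/-- `w(S) = ∫_S w dx` for a weight `w`. -/
def wSet (w : Euc n → ℝ) (S : Set (Euc n)) : ℝ≥0∞ := ∫⁻ x in S, ENNReal.ofReal (w x)

/-- `w` is an `A_∞` weight with constants `(Cw, ν)`. -/
structure IsAinfty (w : Euc n → ℝ) (Cw ν : ℝ) : Prop where
  pos : ∀ x, 0 < w x
  locint : LocallyIntegrable w volume
  bound : ∀ (x : Euc n) (ρ : ℝ), 0 < ρ → ∀ E ⊆ ball x ρ, MeasurableSet E →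
    wSet w E ≤ ENNReal.ofReal Cw * (volume E / volume (ball x ρ)) ^ ν * wSet w (ball x ρ)

/-- The weighted Lorentz quasinorm `‖g‖_{L^{q,s}_w(E)}` (for `ℝ≥0∞`-valued `g`). -/
def lorentzNorm (w : Euc n → ℝ) (E : Set (Euc n)) (q : ℝ) (s : ℝ≥0∞)
    (g : Euc n → ℝ≥0∞) : ℝ≥0∞ :=
  if s = ∞ then
    ⨆ (ρ : ℝ) (_ : 0 < ρ),
      ENNReal.ofReal ρ * (wSet w {x ∈ E | ENNReal.ofReal ρ < g x}) ^ (1 / q)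
  else
    (ENNReal.ofReal q * ∫⁻ ρ in Ioi (0 : ℝ),
      (ENNReal.ofReal ρ ^ q * wSet w {x ∈ E | ENNReal.ofReal ρ < g x}) ^ (s.toReal / q) *
        ENNReal.ofReal (1 / ρ)) ^ (1 / s.toReal)

/-- The Hardy–Littlewood maximal function (for `ℝ≥0∞`-valued functions). -/
def HLMax (g : Euc n → ℝ≥0∞) (x : Euc n) : ℝ≥0∞ :=
  ⨆ (ρ : ℝ) (_ : 0 < ρ), (volume (ball x ρ))⁻¹ * ∫⁻ y in ball x ρ, g y

/-- `Dw` is the gradient of a weak solution of `div A(x, ∇w) = 0` in `B`. -/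
def IsASol (A : Euc n → Euc n → Euc n) (B : Set (Euc n)) (Dw : Euc n → Euc n) : Prop :=
  ∀ φ : Euc n → ℝ, IsTestFn B φ → (∫ x in B, ⟪A x (Dw x), grad φ x⟫_ℝ) = 0

/-- `Du` is the gradient of a distributional solution of `-div A(x,∇u) = μ` in `Ω`. -/
def IsWeakSol (A : Euc n → Euc n → Euc n) (Ω : Set (Euc n)) (Du : Euc n → Euc n)
    (μ : SignedMeasure (Euc n)) : Prop :=
  ∀ φ : Euc n → ℝ, IsTestFn Ω φ → (∫ x in Ω, ⟪A x (Du x), grad φ x⟫_ℝ) = sInt μ φ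

/-- The quantity `T(μ, B)` of the comparison estimates. -/
def Tquant (p σ : ℝ) (μ : SignedMeasure (Euc n)) (f : Euc n → ℝ) (B : Set (Euc n))
    (R : ℝ) : ℝ≥0∞ :=
  if (3 * (n : ℝ) - 2) / (2 * (n : ℝ) - 1) < p then
    μ.totalVariation B / ENNReal.ofReal (R ^ ((n : ℝ) - 1))
  else
    (ENNReal.ofReal (R ^ (σ - (n : ℝ))) * ∫⁻ x in B, (‖f x‖₊ : ℝ≥0∞) ^ σ) ^ (1 / σ)

/-- A family of `ℝ≥0∞`-valued functions, bounded and equi-integrable in `L¹_w(Ω)`. -/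
def BddEquiInt (w : Euc n → ℝ) (Ω : Set (Euc n)) (F : Set (Euc n → ℝ≥0∞)) : Prop :=
  (∃ M : ℝ≥0∞, M ≠ ∞ ∧ ∀ f ∈ F, ∫⁻ x in Ω, f x * ENNReal.ofReal (w x) ≤ M) ∧
  ∀ ε : ℝ≥0∞, 0 < ε → ∃ δ : ℝ≥0∞, 0 < δ ∧ ∀ f ∈ F, ∀ S : Set (Euc n),
    MeasurableSet S → S ⊆ Ω → wSet w S ≤ δ → ∫⁻ x in S, f x * ENNReal.ofReal (w x) ≤ ε

end NQH


/-- The function `|f|^{-α} g`, with the convention that it vanishes wherever `g` does. -/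
def hfun {n : ℕ} (α : ℝ) (f g : Euc n → ℝ) (x : Euc n) : ℝ :=
  if g x = 0 then 0 else |f x| ^ (-α) * g x

-- helper: log-injectivity
lemma eq_of_log_eq {a b : ℝ} (ha : 0 < a) (hb : 0 < b) (h : Real.log a = Real.log b) : a = b :=
  Real.log_injOn_pos (mem_Ioi.mpr ha) (mem_Ioi.mpr hb) h


set_option maxHeartbeats 2000000 in
/-- the level-set interpolation estimate (2.10)/(es1). -/
theorem levelset_interpolation
    (α β γ : ℝ) (hα : α < 1) (hβ : 0 < β) (hγ1 : 0 < γ) (hγ2 : γ < β / (1 - α + β)) :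
    ∃ C : ℝ, 0 < C ∧
      ∀ (n : ℕ) (B : Set (Euc n)) (f g : Euc n → ℝ) (C₀ : ℝ),
        MeasurableSet B → volume B < ∞ →
        AEMeasurable f (volume.restrict B) → AEMeasurable g (volume.restrict B) →
        (∀ x, 0 ≤ g x) → 0 < C₀ →
        (∫⁻ x in B, ENNReal.ofReal (|f x| ^ β)) < ∞ →
        (∀ k : ℝ, 0 < k →
          (∫⁻ x in B ∩ {x | |f x| ≤ k}, ENNReal.ofReal (hfun α f g x)) ≤
            ENNReal.ofReal (C₀ * k ^ (1 - α))) →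
        (∀ lam : ℝ, 0 < lam →
          ENNReal.ofReal (lam ^ (β / (1 - α + β))) * volume {x ∈ B | lam < hfun α f g x} ≤
            ENNReal.ofReal (2 * C₀ ^ (β / (1 - α + β)) *
              (∫ x in B, |f x| ^ β) ^ ((1 - α) / (1 - α + β)))) ∧
        (∫⁻ x in B, ENNReal.ofReal (hfun α f g x ^ γ)) ≤
          ENNReal.ofReal C * volume B ^ (1 - γ * (1 - α + β) / β) *
            ENNReal.ofReal (C₀ ^ γ * (∫ x in B, |f x| ^ β) ^ (γ * (1 - α) / β)) := by
  have h1α : 0 < 1 - α := by linarith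
  have hs : 0 < 1 - α + β := by linarith
  set θ : ℝ := β / (1 - α + β) with hθdef
  have hθpos : 0 < θ := div_pos hβ hs
  have hθγ : 0 < θ - γ := sub_pos.mpr hγ2
  refine ⟨2 * (1 + γ / (θ - γ)), by positivity, ?_⟩
  intro n B f g C₀ hB hBfin hf hg hg0 hC₀ hFfin hbound
  set h := hfun α f g with hhdef
  have hnn : ∀ x, 0 ≤ h x := by
    intro x
    rw [hhdef]; unfold hfun
    split
    · exact le_refl 0
    · exact mul_nonneg (Real.rpow_nonneg (abs_nonneg _) _) (hg0 x)
  obtain ⟨f₀, hf₀m, hff₀⟩ := hf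
  obtain ⟨g₀, hg₀m, hgg₀⟩ := hg
  have hhm : AEMeasurable h (volume.restrict B) := by
    refine ⟨fun x => if g₀ x = 0 then 0 else |f₀ x| ^ (-α) * g₀ x, ?_, ?_⟩
    · exact Measurable.ite (measurableSet_eq_fun hg₀m measurable_const) measurable_const
        ((hf₀m.abs.pow_const (-α)).mul hg₀m)
    · filter_upwards [hff₀, hgg₀] with x h1 h2
      rw [hhdef]; unfold hfun; rw [h1, h2]
  -- facts about |f| ^ β
  have hfβnn : ∀ x : Euc n, 0 ≤ |f x| ^ β := fun x => Real.rpow_nonneg (abs_nonneg _) _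
  have hfβm : AEMeasurable (fun x => |f x| ^ β) (volume.restrict B) :=
    ⟨fun x => |f₀ x| ^ β, hf₀m.abs.pow_const β, by
      filter_upwards [hff₀] with x hx; rw [hx]⟩
  have hInt : Integrable (fun x => |f x| ^ β) (volume.restrict B) := by
    refine ⟨hfβm.aestronglyMeasurable, ?_⟩
    rw [hasFiniteIntegral_iff_ofReal (Eventually.of_forall hfβnn)]
    exact hFfin
  set Fr : ℝ := ∫ x in B, |f x| ^ β with hFdef
  have hFnn : 0 ≤ Fr := integral_nonneg hfβnn
  have hFe : ENNReal.ofReal Fr = ∫⁻ x in B, ENNReal.ofReal (|f x| ^ β) :=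
    ofReal_integral_eq_lintegral_ofReal hInt (Eventually.of_forall hfβnn)
  -- the basic level-set bound
  have key1 : ∀ lam : ℝ, 0 < lam → ∀ k : ℝ, 0 < k →
      volume.restrict B {x | lam < h x} ≤
        ENNReal.ofReal (C₀ * k ^ (1 - α) / lam) + ENNReal.ofReal Fr / ENNReal.ofReal (k ^ β) := by
    intro lam hlam k hk
    have hsub : {x | lam < h x} ⊆
        ({x | lam < h x} ∩ {x | |f x| ≤ k}) ∪ {x | k < |f x|} := by
      intro x hx
      by_cases hc : |f x| ≤ k
      · exact Or.inl ⟨hx, hc⟩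
      · exact Or.inr (lt_of_not_ge hc)
    have part1 : volume.restrict B ({x | lam < h x} ∩ {x | |f x| ≤ k}) ≤
        ENNReal.ofReal (C₀ * k ^ (1 - α) / lam) := by
      set ν := (volume.restrict B).restrict {x | |f x| ≤ k} with hνdef
      have hν : ν = volume.restrict (B ∩ {x | |f x| ≤ k}) := by
        rw [hνdef, Measure.restrict_restrict' hB, Set.inter_comm]
      have hnule : ν ≤ volume.restrict B := Measure.restrict_le_self
      have hmark := mul_meas_ge_le_lintegral₀ (μ := ν)
        ((hhm.mono_measure hnule).ennreal_ofReal) (ENNReal.ofReal lam)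
      have hsubset : {x | lam < h x} ⊆ {x | ENNReal.ofReal lam ≤ ENNReal.ofReal (h x)} :=
        fun x hx => ENNReal.ofReal_le_ofReal (le_of_lt hx)
      have h2 : ENNReal.ofReal lam * volume.restrict B ({x | lam < h x} ∩ {x | |f x| ≤ k}) ≤
          ENNReal.ofReal (C₀ * k ^ (1 - α)) := by
        calc ENNReal.ofReal lam * volume.restrict B ({x | lam < h x} ∩ {x | |f x| ≤ k})
            ≤ ENNReal.ofReal lam * ν {x | lam < h x} :=
              mul_le_mul_right (Measure.le_restrict_apply _ _) _
          _ ≤ ENNReal.ofReal lam * ν {x | ENNReal.ofReal lam ≤ ENNReal.ofReal (h x)} :=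
              mul_le_mul_right (measure_mono hsubset) _
          _ ≤ ∫⁻ x, ENNReal.ofReal (h x) ∂ν := hmark
          _ = ∫⁻ x in B ∩ {x | |f x| ≤ k}, ENNReal.ofReal (h x) := by rw [hν]
          _ ≤ ENNReal.ofReal (C₀ * k ^ (1 - α)) := hbound k hk
      rw [ENNReal.ofReal_div_of_pos hlam]
      rw [ENNReal.le_div_iff_mul_le (Or.inl (ENNReal.ofReal_pos.mpr hlam).ne')
        (Or.inl ENNReal.ofReal_ne_top)]
      rwa [mul_comm]
    have part2 : volume.restrict B {x | k < |f x|} ≤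
        ENNReal.ofReal Fr / ENNReal.ofReal (k ^ β) := by
      have hmark := mul_meas_ge_le_lintegral₀ (hfβm.ennreal_ofReal) (ENNReal.ofReal (k ^ β))
      have hsubset : {x : Euc n | k < |f x|} ⊆
          {x | ENNReal.ofReal (k ^ β) ≤ ENNReal.ofReal (|f x| ^ β)} := fun x hx =>
        ENNReal.ofReal_le_ofReal (Real.rpow_le_rpow hk.le hx.le hβ.le)
      rw [ENNReal.le_div_iff_mul_le
        (Or.inl (ENNReal.ofReal_pos.mpr (Real.rpow_pos_of_pos hk β)).ne')
        (Or.inl ENNReal.ofReal_ne_top), mul_comm, hFe]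
      exact le_trans (mul_le_mul_right (measure_mono hsubset) _) hmark
    calc volume.restrict B {x | lam < h x}
        ≤ volume.restrict B (({x | lam < h x} ∩ {x | |f x| ≤ k}) ∪ {x | k < |f x|}) :=
          measure_mono hsub
      _ ≤ volume.restrict B ({x | lam < h x} ∩ {x | |f x| ≤ k}) +
          volume.restrict B {x | k < |f x|} := measure_union_le _ _
      _ ≤ _ := add_le_add part1 part2
  -- the case F = 0
  have keyzero : Fr = 0 → ∀ lam : ℝ, 0 < lam → volume.restrict B {x | lam < h x} = 0 := by
    intro hF0 lam hlam
    refine le_antisymm ?_ zero_le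
    refine ENNReal.le_of_forall_pos_le_add fun ε hε _ => ?_
    rw [zero_add]
    have hεpos : (0:ℝ) < (ε:ℝ) := hε
    set k : ℝ := ((ε:ℝ) * lam / C₀) ^ (1 / (1 - α)) with hkdef
    have hk : 0 < k := Real.rpow_pos_of_pos (by positivity) _
    have hkey := key1 lam hlam k hk
    rw [hF0, ENNReal.ofReal_zero, ENNReal.zero_div, add_zero] at hkey
    have heq : C₀ * k ^ (1 - α) / lam = (ε:ℝ) := by
      rw [hkdef, ← Real.rpow_mul (by positivity), one_div_mul_cancel h1α.ne', Real.rpow_one]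
      field_simp
    rw [heq] at hkey
    exact hkey.trans (le_of_eq (ENNReal.ofReal_coe_nnreal))
  -- the quantitative bound in the main case
  have keyM : 0 < Fr → ∀ lam : ℝ, 0 < lam → volume.restrict B {x | lam < h x} ≤
      ENNReal.ofReal ((2 * C₀ ^ θ * Fr ^ ((1 - α) / (1 - α + β))) * lam ^ (-θ)) := by
    intro hF lam hlam
    set k : ℝ := (Fr * lam / C₀) ^ (1 - α + β)⁻¹ with hkdef
    have hXpos : (0:ℝ) < Fr * lam / C₀ := by positivity
    have hk : 0 < k := Real.rpow_pos_of_pos hXpos _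
    have hkey := key1 lam hlam k hk
    rw [← ENNReal.ofReal_div_of_pos (Real.rpow_pos_of_pos hk β),
      ← ENNReal.ofReal_add (by positivity) (by positivity)] at hkey
    refine hkey.trans (le_of_eq ?_)
    congr 1
    have t1 : C₀ * k ^ (1 - α) / lam = C₀ ^ θ * Fr ^ ((1 - α) / (1 - α + β)) * lam ^ (-θ) := by
      refine eq_of_log_eq (by positivity) (by positivity) ?_
      rw [Real.log_div (by positivity) hlam.ne', Real.log_mul hC₀.ne' (by positivity),
        Real.log_rpow hk, hkdef, Real.log_rpow hXpos,
        Real.log_div (by positivity) hC₀.ne', Real.log_mul hF.ne' hlam.ne',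
        Real.log_mul (by positivity) (by positivity),
        Real.log_mul (by positivity) (by positivity),
        Real.log_rpow hC₀, Real.log_rpow hF, Real.log_rpow hlam, hθdef]
      field_simp
      ring
    have t2 : Fr / k ^ β = C₀ ^ θ * Fr ^ ((1 - α) / (1 - α + β)) * lam ^ (-θ) := by
      refine eq_of_log_eq (by positivity) (by positivity) ?_
      rw [Real.log_div hF.ne' (by positivity), Real.log_rpow hk, hkdef, Real.log_rpow hXpos,
        Real.log_div (by positivity) hC₀.ne', Real.log_mul hF.ne' hlam.ne',
        Real.log_mul (by positivity) (by positivity),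
        Real.log_mul (by positivity) (by positivity),
        Real.log_rpow hC₀, Real.log_rpow hF, Real.log_rpow hlam, hθdef]
      field_simp
      ring
    rw [t1, t2]
    ring
  -- identification of the level set
  have hvol : ∀ lam : ℝ, volume {x | x ∈ B ∧ lam < h x} = volume.restrict B {x | lam < h x} := by
    intro lam
    rw [Measure.restrict_apply' hB]
    congr 1
    ext x
    simp [and_comm]
  -- claim 1
  have claim1 : ∀ lam : ℝ, 0 < lam →
      ENNReal.ofReal (lam ^ θ) * volume {x | x ∈ B ∧ lam < h x} ≤
        ENNReal.ofReal (2 * C₀ ^ θ * Fr ^ ((1 - α) / (1 - α + β))) := by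
    intro lam hlam
    rw [hvol lam]
    rcases eq_or_lt_of_le hFnn with hF0 | hFpos
    · rw [keyzero hF0.symm lam hlam, mul_zero]
      exact zero_le
    · calc ENNReal.ofReal (lam ^ θ) * volume.restrict B {x | lam < h x}
          ≤ ENNReal.ofReal (lam ^ θ) *
            ENNReal.ofReal ((2 * C₀ ^ θ * Fr ^ ((1 - α) / (1 - α + β))) * lam ^ (-θ)) :=
            mul_le_mul_right (keyM hFpos lam hlam) _
        _ = ENNReal.ofReal (2 * C₀ ^ θ * Fr ^ ((1 - α) / (1 - α + β))) := by
            rw [← ENNReal.ofReal_mul (Real.rpow_nonneg hlam.le _)]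
            congr 1
            rw [Real.rpow_neg hlam.le]
            field_simp
  refine ⟨claim1, ?_⟩
  by_cases hBzero : volume B = 0
  · rw [Measure.restrict_eq_zero.mpr hBzero, lintegral_zero_measure]
    exact zero_le
  rcases eq_or_lt_of_le hFnn with hF0 | hFpos
  · -- the degenerate case F = 0 : h vanishes a.e.
    have hnull : volume.restrict B {x | 0 < h x} = 0 := by
      have hsub : {x | 0 < h x} ⊆ ⋃ m : ℕ, {x | (1:ℝ)/(m+1) < h x} := by
        intro x hx
        obtain ⟨m, hm⟩ := exists_nat_gt (1 / h x)
        refine mem_iUnion.mpr ⟨m, ?_⟩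
        rw [mem_setOf_eq, div_lt_iff₀ (by positivity)]
        rw [div_lt_iff₀ hx] at hm
        nlinarith [hx]
      exact measure_mono_null hsub
        (measure_iUnion_null fun m => keyzero hF0.symm _ (by positivity))
    have hae : ∀ᵐ x ∂volume.restrict B, ENNReal.ofReal (h x ^ γ) = 0 := by
      have hae0 : ∀ᵐ x ∂volume.restrict B, ¬ (0 < h x) := by
        rw [ae_iff]
        simpa using hnull
      filter_upwards [hae0] with x hx
      have hx0 : h x = 0 := le_antisymm (not_lt.mp hx) (hnn x)
      rw [hx0, Real.zero_rpow hγ1.ne', ENNReal.ofReal_zero]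
    rw [lintegral_congr_ae hae, lintegral_zero]
    exact zero_le
  -- the main case
  have hbpos : 0 < (volume B).toReal := ENNReal.toReal_pos hBzero hBfin.ne
  set b : ℝ := (volume B).toReal with hbdef
  have hBor : volume B = ENNReal.ofReal b := (ENNReal.ofReal_toReal hBfin.ne).symm
  set M : ℝ := 2 * C₀ ^ θ * Fr ^ ((1 - α) / (1 - α + β)) with hMdef
  have hMpos : 0 < M := by positivity
  set lam0 : ℝ := (M / b) ^ θ⁻¹ with hl0def
  have hl0 : 0 < lam0 := Real.rpow_pos_of_pos (by positivity) _
  -- layer cake formula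
  have g_intble : ∀ t > (0:ℝ), IntervalIntegrable (fun t => γ * t ^ (γ-1)) volume 0 t :=
    fun t _ => (intervalIntegral.intervalIntegrable_rpow' (by linarith)).const_mul γ
  have hinner : ∀ y : ℝ, 0 ≤ y → ∫ t in (0:ℝ)..y, γ * t ^ (γ-1) = y ^ γ := by
    intro y hy
    rw [intervalIntegral.integral_const_mul, integral_rpow (Or.inl (by linarith))]
    have he : γ - 1 + 1 = γ := by ring
    rw [he, Real.zero_rpow hγ1.ne', sub_zero]
    field_simp
  have lc := lintegral_comp_eq_lintegral_meas_lt_mul (volume.restrict B)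
      (Eventually.of_forall hnn) hhm g_intble
      ((ae_restrict_mem measurableSet_Ioi).mono fun t ht =>
        mul_nonneg hγ1.le (Real.rpow_nonneg (le_of_lt ht) _))
  have lhs_eq : ∫⁻ x in B, ENNReal.ofReal (h x ^ γ) =
      ∫⁻ t in Ioi (0:ℝ), volume.restrict B {a | t < h a} * ENNReal.ofReal (γ * t ^ (γ-1)) := by
    rw [← lc]
    exact lintegral_congr fun x => by rw [hinner _ (hnn x)]
  -- the two elementary integrals
  have hI1 : ∫⁻ t in Ioc (0:ℝ) lam0, ENNReal.ofReal (γ * t ^ (γ-1)) =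
      ENNReal.ofReal (lam0 ^ γ) := by
    rw [← ofReal_integral_eq_lintegral_ofReal ((g_intble lam0 hl0).1)
      ((ae_restrict_mem measurableSet_Ioc).mono fun t ht =>
        mul_nonneg hγ1.le (Real.rpow_nonneg ht.1.le _))]
    rw [← intervalIntegral.integral_of_le hl0.le, hinner lam0 hl0.le]
  have hI2 : ∫⁻ t in Ioi lam0, ENNReal.ofReal (t ^ (γ - 1 - θ)) =
      ENNReal.ofReal (lam0 ^ (γ - θ) / (θ - γ)) := by
    rw [← ofReal_integral_eq_lintegral_ofReal (integrableOn_Ioi_rpow_of_lt (by linarith) hl0)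
      ((ae_restrict_mem measurableSet_Ioi).mono fun t ht =>
        Real.rpow_nonneg (le_of_lt (hl0.trans ht)) _)]
    rw [integral_Ioi_rpow_of_lt (by linarith) hl0]
    congr 1
    have he : γ - 1 - θ + 1 = γ - θ := by ring
    rw [he]
    have hne1 : γ - θ ≠ 0 := by linarith
    have hne2 : θ - γ ≠ 0 := by linarith
    field_simp
    ring
  -- the main estimate
  have main : ∫⁻ x in B, ENNReal.ofReal (h x ^ γ) ≤
      ENNReal.ofReal (b * lam0 ^ γ + M * γ / (θ - γ) * lam0 ^ (γ - θ)) := by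
    rw [lhs_eq]
    rw [show Ioi (0:ℝ) = Ioc 0 lam0 ∪ Ioi lam0 from (Ioc_union_Ioi_eq_Ioi hl0.le).symm]
    rw [lintegral_union measurableSet_Ioi Ioc_disjoint_Ioi_same]
    have hterm1 : ∫⁻ t in Ioc (0:ℝ) lam0,
        volume.restrict B {a | t < h a} * ENNReal.ofReal (γ * t ^ (γ-1)) ≤
        ENNReal.ofReal (b * lam0 ^ γ) := by
      calc ∫⁻ t in Ioc (0:ℝ) lam0,
            volume.restrict B {a | t < h a} * ENNReal.ofReal (γ * t ^ (γ-1))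
          ≤ ∫⁻ t in Ioc (0:ℝ) lam0, volume B * ENNReal.ofReal (γ * t ^ (γ-1)) := by
            refine lintegral_mono fun t => mul_le_mul_left ?_ _
            exact (measure_mono (subset_univ _)).trans_eq (Measure.restrict_apply_univ _)
        _ = volume B * ∫⁻ t in Ioc (0:ℝ) lam0, ENNReal.ofReal (γ * t ^ (γ-1)) :=
            lintegral_const_mul' _ _ hBfin.ne
        _ = ENNReal.ofReal (b * lam0 ^ γ) := by
            rw [hI1, hBor, ← ENNReal.ofReal_mul ENNReal.toReal_nonneg]
    have hterm2 : ∫⁻ t in Ioi lam0,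
        volume.restrict B {a | t < h a} * ENNReal.ofReal (γ * t ^ (γ-1)) ≤
        ENNReal.ofReal (M * γ / (θ - γ) * lam0 ^ (γ - θ)) := by
      calc ∫⁻ t in Ioi lam0,
            volume.restrict B {a | t < h a} * ENNReal.ofReal (γ * t ^ (γ-1))
          ≤ ∫⁻ t in Ioi lam0, ENNReal.ofReal (M * γ) * ENNReal.ofReal (t ^ (γ - 1 - θ)) := by
            refine lintegral_mono_ae ((ae_restrict_mem measurableSet_Ioi).mono fun t ht => ?_)
            have htpos : 0 < t := hl0.trans ht
            calc volume.restrict B {a | t < h a} * ENNReal.ofReal (γ * t ^ (γ-1))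
                ≤ ENNReal.ofReal (M * t ^ (-θ)) * ENNReal.ofReal (γ * t ^ (γ-1)) :=
                  mul_le_mul_left (keyM hFpos t htpos) _
              _ = ENNReal.ofReal (M * γ) * ENNReal.ofReal (t ^ (γ - 1 - θ)) := by
                  rw [← ENNReal.ofReal_mul (mul_nonneg hMpos.le (Real.rpow_nonneg htpos.le _)),
                    ← ENNReal.ofReal_mul (mul_nonneg hMpos.le hγ1.le)]
                  congr 1
                  rw [show γ - 1 - θ = -θ + (γ-1) by ring, Real.rpow_add htpos]
                  ring
        _ = ENNReal.ofReal (M * γ) * ∫⁻ t in Ioi lam0, ENNReal.ofReal (t ^ (γ - 1 - θ)) :=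
            lintegral_const_mul' _ _ ENNReal.ofReal_ne_top
        _ = ENNReal.ofReal (M * γ / (θ - γ) * lam0 ^ (γ - θ)) := by
            rw [hI2, ← ENNReal.ofReal_mul (mul_nonneg hMpos.le hγ1.le)]
            congr 1
            ring
    calc _ ≤ _ := add_le_add hterm1 hterm2
      _ = ENNReal.ofReal (b * lam0 ^ γ + M * γ / (θ - γ) * lam0 ^ (γ - θ)) :=
        (ENNReal.ofReal_add (mul_nonneg hbpos.le (Real.rpow_nonneg hl0.le _))
          (mul_nonneg (div_nonneg (mul_nonneg hMpos.le hγ1.le) (le_of_lt hθγ))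
            (Real.rpow_nonneg hl0.le _))).symm
  -- final algebra
  have hCpos : (0:ℝ) < 2 * (1 + γ / (θ - γ)) := by
    have := div_pos hγ1 hθγ
    linarith
  have hA : b * lam0 ^ γ = b ^ (1 - γ * (1 - α + β) / β) * M ^ (γ * (1 - α + β) / β) := by
    refine eq_of_log_eq (by positivity) (by positivity) ?_
    rw [Real.log_mul hbpos.ne' (by positivity),
      Real.log_mul (by positivity) (by positivity),
      Real.log_rpow hl0, hl0def, Real.log_rpow (div_pos hMpos hbpos),
      Real.log_div hMpos.ne' hbpos.ne', Real.log_rpow hbpos, Real.log_rpow hMpos, hθdef]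
    field_simp
    ring
  have hl0θ : lam0 ^ θ = M / b := by
    rw [hl0def, ← Real.rpow_mul (by positivity), inv_mul_cancel₀ hθpos.ne', Real.rpow_one]
  have hB2 : M * lam0 ^ (γ - θ) = b * lam0 ^ γ := by
    have hsplit : lam0 ^ γ = lam0 ^ (γ - θ) * lam0 ^ θ := by
      rw [← Real.rpow_add hl0]
      congr 1
      ring
    rw [hsplit, hl0θ]
    field_simp
  have hM2 : M ^ (γ * (1 - α + β) / β) =
      2 ^ (γ * (1 - α + β) / β) * (C₀ ^ γ * Fr ^ (γ * (1 - α) / β)) := by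
    refine eq_of_log_eq (by positivity) (by positivity) ?_
    rw [Real.log_rpow hMpos, hMdef,
      Real.log_mul (by positivity) (by positivity),
      Real.log_mul (by positivity) (by positivity),
      Real.log_mul (by positivity) (by positivity),
      Real.log_mul (by positivity) (by positivity),
      Real.log_rpow hC₀, Real.log_rpow hFpos,
      Real.log_rpow (by norm_num : (0:ℝ) < 2), Real.log_rpow hC₀, Real.log_rpow hFpos, hθdef]
    field_simp
    ring
  have hτ1 : γ * (1 - α + β) / β ≤ 1 := by
    rw [div_le_one hβ]
    have := (lt_div_iff₀ hs).mp hγ2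
    linarith
  have h2τ : (2:ℝ) ^ (γ * (1 - α + β) / β) ≤ 2 := by
    calc (2:ℝ) ^ (γ * (1 - α + β) / β) ≤ (2:ℝ) ^ (1:ℝ) :=
        Real.rpow_le_rpow_of_exponent_le one_le_two hτ1
      _ = 2 := Real.rpow_one 2
  have hfinal : b * lam0 ^ γ + M * γ / (θ - γ) * lam0 ^ (γ - θ) ≤
      2 * (1 + γ / (θ - γ)) * b ^ (1 - γ * (1 - α + β) / β) *
        (C₀ ^ γ * Fr ^ (γ * (1 - α) / β)) := by
    have hrw : M * γ / (θ - γ) * lam0 ^ (γ - θ) = γ / (θ - γ) * (M * lam0 ^ (γ - θ)) := by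
      ring
    rw [hrw, hB2, hA, hM2]
    have hX : (0:ℝ) ≤ b ^ (1 - γ * (1 - α + β) / β) := Real.rpow_nonneg hbpos.le _
    have hY : (0:ℝ) ≤ C₀ ^ γ * Fr ^ (γ * (1 - α) / β) := by positivity
    have hT : (0:ℝ) ≤ (2:ℝ) ^ (γ * (1 - α + β) / β) := by positivity
    have hc : (0:ℝ) ≤ γ / (θ - γ) := le_of_lt (div_pos hγ1 hθγ)
    nlinarith [mul_le_mul_of_nonneg_right h2τ (mul_nonneg hX hY),
      mul_le_mul_of_nonneg_left (mul_le_mul_of_nonneg_right h2τ (mul_nonneg hX hY)) hc]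
  refine main.trans ?_
  rw [hBor, ENNReal.ofReal_rpow_of_pos hbpos,
    ← ENNReal.ofReal_mul hCpos.le, ← ENNReal.ofReal_mul (by positivity)]
  exact ENNReal.ofReal_le_ofReal hfinal


end
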